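/- arXiv:0711.0605 — 4 statements merged into one kernel-verified Lean document; each statement's English description precedes it below -/
import Mathlib

section
/- Let H(ξ) be the 4×4 matrix with rows (0, 2ξ₂, 0, 0), (2ξ₂, 2ξ₁+2ξ₄², −2ξ₄, 4ξ₂ξ₄−2ξ₃), (0, −2ξ₄, 2, −2ξ₂), (0, 4ξ₂ξ₄−2ξ₃, −2ξ₂, 2ξ₂²) over ℂ. Then for every ξ ∈ ℂ⁴, rank H(ξ) ≤ 3, and there exists ξ with rank H(ξ) = 3. -/
/-!
The determinant of `H ξ` vanishes identically; for `ξ₂ ≠ 0` the kernel is spanned by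
`(ξ₃ − ξ₂ξ₄, 0, ξ₂², ξ₂)`. On the other hand the principal minor on the first three
coordinates equals `−8ξ₂²`, so the rank is exactly `3` as soon as `ξ₂ ≠ 0`.
-/

/-- The explicit 4×4 matrix `H(ξ)` (the Hessian of `ψ(ξ) = ξ₁ξ₂² + (ξ₃ − ξ₂ξ₄)²`). -/
def H (ξ : Fin 4 → ℂ) : Matrix (Fin 4) (Fin 4) ℂ :=
  !![0,      2 * ξ 1,                    0,       0;
     2 * ξ 1, 2 * ξ 0 + 2 * (ξ 3) ^ 2,  -2 * ξ 3, 4 * ξ 1 * ξ 3 - 2 * ξ 2;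
     0,      -2 * ξ 3,                   2,      -2 * ξ 1;
     0,       4 * ξ 1 * ξ 3 - 2 * ξ 2,  -2 * ξ 1, 2 * (ξ 1) ^ 2]

namespace Matrix

variable {m n ι K : Type*} [Field K] [Fintype n]

theorem rank_lt_card_of_det_eq_zero [DecidableEq n] {A : Matrix n n K} (h : A.det = 0) :
    A.rank < Fintype.card n := by
  obtain ⟨v, hv, hAv⟩ := exists_mulVec_eq_zero_iff.mpr h
  have hker : Module.finrank K (LinearMap.ker A.mulVecLin) ≠ 0 := fun h0 => by
    have : v ∈ LinearMap.ker A.mulVecLin := hAv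
    exact hv (by simpa [Submodule.finrank_eq_zero.mp h0] using this)
  have := LinearMap.finrank_range_add_finrank_ker A.mulVecLin
  rw [Module.finrank_fintype_fun_eq_card] at this
  exact show Module.finrank K (LinearMap.range A.mulVecLin) < _ by omega

theorem card_le_rank_of_det_submatrix_ne_zero [Fintype ι] [DecidableEq ι] (A : Matrix m n K)
    (r : ι → m) (c : ι → n) (h : (A.submatrix r c).det ≠ 0) : Fintype.card ι ≤ A.rank :=
  rank_of_det_ne_zero h ▸ rank_submatrix_le A r c

end Matrix

theorem det_H (ξ : Fin 4 → ℂ) : (H ξ).det = 0 := by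
  simp [H, Matrix.det_succ_row_zero, Fin.sum_univ_succ, Fin.succAbove]
  right
  ring

theorem det_H_submatrix (ξ : Fin 4 → ℂ) :
    ((H ξ).submatrix ![0, 1, 2] ![0, 1, 2]).det = -8 * ξ 1 ^ 2 := by
  rw [Matrix.det_fin_three]
  simp [H]
  ring

theorem rank_H_le (ξ : Fin 4 → ℂ) : (H ξ).rank ≤ 3 :=
  Nat.le_of_lt_succ (Matrix.rank_lt_card_of_det_eq_zero (det_H ξ))

theorem rank_H_of_ne_zero {ξ : Fin 4 → ℂ} (hξ : ξ 1 ≠ 0) : (H ξ).rank = 3 := by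
  refine le_antisymm (rank_H_le ξ) ?_
  simpa using (H ξ).card_le_rank_of_det_submatrix_ne_zero ![0, 1, 2] ![0, 1, 2]
    (by rw [det_H_submatrix]; exact mul_ne_zero (by norm_num) (pow_ne_zero 2 hξ))

theorem stmt_4 : (∀ ξ : Fin 4 → ℂ, (H ξ).rank ≤ 3) ∧ (∃ ξ : Fin 4 → ℂ, (H ξ).rank = 3) :=
  ⟨rank_H_le, 1, rank_H_of_ne_zero (ξ := 1) one_ne_zero⟩
end

section
/- Let H(ξ) be the Hessian of ψ(ξ) = ξ₁ξ₂² + (ξ₃ − ξ₂ξ₄)² on ℂ⁴ and suppose ξ₂ ≠ 0. Then the kernel of H(ξ) (as a linear map ℂ⁴ → ℂ⁴) is the one-dimensional span of the vector (ξ₃/ξ₂ − ξ₄, 0, ξ₂, 1). -/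
open Matrix

noncomputable abbrev kernelVector (ξ : Fin 4 → ℂ) : Fin 4 → ℂ := ![ξ 2 / ξ 1 - ξ 3, 0, ξ 1, 1]

lemma H_mulVec (ξ u : Fin 4 → ℂ) :
    H ξ *ᵥ u =
      ![2 * ξ 1 * u 1,
        2 * ξ 1 * u 0 + (2 * ξ 0 + 2 * ξ 3 ^ 2) * u 1 - 2 * ξ 3 * u 2
          + (4 * ξ 1 * ξ 3 - 2 * ξ 2) * u 3,
        -2 * ξ 3 * u 1 + 2 * u 2 - 2 * ξ 1 * u 3,
        (4 * ξ 1 * ξ 3 - 2 * ξ 2) * u 1 - 2 * ξ 1 * u 2 + 2 * ξ 1 ^ 2 * u 3] := by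
  ext i
  fin_cases i <;> simp [H, mulVec, dotProduct, Fin.sum_univ_four] <;> ring

lemma H_mulVec_kernelVector {ξ : Fin 4 → ℂ} (hξ : ξ 1 ≠ 0) : H ξ *ᵥ kernelVector ξ = 0 := by
  rw [H_mulVec]
  ext i
  fin_cases i <;> simp <;> field_simp <;> ring

lemma eq_smul_kernelVector_of_H_mulVec_eq_zero {ξ u : Fin 4 → ℂ} (hξ : ξ 1 ≠ 0)
    (hu : H ξ *ᵥ u = 0) : u = u 3 • kernelVector ξ := by
  rw [H_mulVec] at hu
  have row0 := congrFun hu 0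
  have row1 := congrFun hu 1
  have row2 := congrFun hu 2
  simp only [Fin.isValue, cons_val, Pi.zero_apply] at row0 row1 row2
  have hu1 : u 1 = 0 := by simpa [hξ] using row0
  have hu2 : u 2 = ξ 1 * u 3 := by linear_combination row2 / 2 + ξ 3 * hu1
  ext i
  fin_cases i
  · simp only [Fin.zero_eta, Fin.isValue, Pi.smul_apply, cons_val_zero, smul_eq_mul]
    field_simp
    linear_combination row1 / 2 - (ξ 0 + ξ 3 ^ 2) * hu1 + ξ 3 * hu2
  · simpa using hu1
  · simpa [mul_comm] using hu2
  · simp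

theorem stmt_6 (ξ : Fin 4 → ℂ) (hξ : ξ 1 ≠ 0) :
    {u : Fin 4 → ℂ | (H ξ).mulVec u = 0} =
      ↑(Submodule.span ℂ {![ξ 2 / ξ 1 - ξ 3, 0, ξ 1, 1]}) ∧
    Module.finrank ℂ (Submodule.span ℂ ({![ξ 2 / ξ 1 - ξ 3, 0, ξ 1, 1]} :
      Set (Fin 4 → ℂ))) = 1 := by
  have hv : kernelVector ξ ≠ 0 := fun h => by simpa using congrFun h 3
  refine ⟨?_, finrank_span_singleton hv⟩
  ext u
  simp only [Set.mem_ofPred_eq, SetLike.mem_coe, Submodule.mem_span_singleton]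
  constructor
  · exact fun hu => ⟨u 3, (eq_smul_kernelVector_of_H_mulVec_eq_zero hξ hu).symm⟩
  · rintro ⟨c, rfl⟩
    rw [mulVec_smul, H_mulVec_kernelVector hξ, smul_zero]
end

section
/- Define ψ(ξ) = ξ₁ξ₂² + (ξ₃ − ξ₂ξ₄)² on ℂ⁴ and Γ = ∇ψ. For every ξ with ξ₂ ≠ 0, the vector v(ξ) = (ξ₃/ξ₂ − ξ₄, 0, ξ₂, 1) satisfies: Γ(ξ + t·v(ξ)) = Γ(ξ) for all t ∈ ℂ, i.e. the line through ξ in direction v(ξ) lies in the level set of Γ through ξ. -/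
/-!
With `w = ξ₃ − ξ₂ξ₄` the gradient is `Γ = (ξ₂², 2(ξ₁ξ₂ − ξ₄w), 2w, −2ξ₂w)`, so it only depends on
`ξ₂`, `w` and `ξ₁ξ₂ − ξ₄w`. Moving along `v(ξ)` fixes `ξ₂`, shifts `ξ₃` by `tξ₂` and `ξ₄` by `t`,
hence fixes `w`; and `ξ₁ξ₂` grows by `t(ξ₃/ξ₂ − ξ₄)ξ₂ = tw`, exactly as much as `ξ₄w` does.
-/

/-- The (complex) gradient of `ψ` at `ξ`. -/
noncomputable def grad {n : ℕ} (ψ : (Fin n → ℂ) → ℂ) (ξ : Fin n → ℂ) : Fin n → ℂ :=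
  fun i => fderiv ℂ ψ ξ (Pi.single i 1)

/-- Coordinates are indexed from `0`: `ξ 0, …, ξ 3` are the paper's `ξ₁, …, ξ₄`. -/
def psi (ξ : Fin 4 → ℂ) : ℂ := ξ 0 * ξ 1 ^ 2 + (ξ 2 - ξ 1 * ξ 3) ^ 2

theorem grad_psi (ξ : Fin 4 → ℂ) :
    grad psi ξ = ![ξ 1 ^ 2, 2 * (ξ 0 * ξ 1 - ξ 3 * (ξ 2 - ξ 1 * ξ 3)),
      2 * (ξ 2 - ξ 1 * ξ 3), -(2 * ξ 1 * (ξ 2 - ξ 1 * ξ 3))] := by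
  ext i
  have fderiv_coord (j : Fin 4) :
      fderiv ℂ (fun ξ : Fin 4 → ℂ => ξ j) ξ = ContinuousLinearMap.proj j :=
    (hasFDerivAt_apply j ξ).fderiv
  unfold grad psi
  rw [fderiv_fun_add (by fun_prop) (by fun_prop), fderiv_fun_mul (by fun_prop) (by fun_prop),
    fderiv_fun_pow _ (by fun_prop), fderiv_fun_pow _ (by fun_prop),
    fderiv_fun_sub (by fun_prop) (by fun_prop), fderiv_fun_mul (by fun_prop) (by fun_prop)]
  fin_cases i <;> simp [fderiv_coord] <;> ring

theorem stmt_7 (ξ : Fin 4 → ℂ) (hξ : ξ 1 ≠ 0) (t : ℂ) :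
    grad (fun ξ => ξ 0 * (ξ 1) ^ 2 + (ξ 2 - ξ 1 * ξ 3) ^ 2)
        (ξ + t • ![ξ 2 / ξ 1 - ξ 3, 0, ξ 1, 1]) =
      grad (fun ξ => ξ 0 * (ξ 1) ^ 2 + (ξ 2 - ξ 1 * ξ 3) ^ 2) ξ := by
  set η := ξ + t • ![ξ 2 / ξ 1 - ξ 3, 0, ξ 1, 1]
  have hη (i : Fin 4) : η i = ξ i + t * ![ξ 2 / ξ 1 - ξ 3, 0, ξ 1, 1] i := rfl
  have h₁ : η 1 = ξ 1 := by
    simp only [hη, Matrix.cons_val_one, Matrix.cons_val_zero, mul_zero, add_zero]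
  have hw : η 2 - η 1 * η 3 = ξ 2 - ξ 1 * ξ 3 := by
    simp only [hη, Matrix.cons_val, Matrix.cons_val_one, Matrix.cons_val_zero]
    ring
  have hu : η 0 * ξ 1 - η 3 * (ξ 2 - ξ 1 * ξ 3) = ξ 0 * ξ 1 - ξ 3 * (ξ 2 - ξ 1 * ξ 3) := by
    simp only [hη, Matrix.cons_val_zero, Matrix.cons_val]
    field_simp
    ring
  change grad psi η = grad psi ξ
  rw [grad_psi, grad_psi, hw, h₁, hu]
end

section
/- Define ψ(x,y,z,v,w,s,t) = xy² + sv² + (z − yw − vt)² on ℂ⁷ and Γ = ∇ψ. For every point ξ with y ≠ 0 and v ≠ 0, Γ is constant along the 2-dimensional affine plane ξ + span(u₁, u₂), where u₁ = ((z−yw−vt)/y, 0, y, 0, 1, 0, 0) and u₂ = (0, 0, v, 0, 0, (z−yw−vt)/v, 1) in coordinates (x,y,z,v,w,s,t): for all a, b ∈ ℂ, Γ(ξ + a·u₁ + b·u₂) = Γ(ξ). -/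
/-- `ψ(x,y,z,v,w,s,t) = xy² + sv² + (z − yw − vt)²` in coordinates
`(x,y,z,v,w,s,t) = (ξ 0, ξ 1, ξ 2, ξ 3, ξ 4, ξ 5, ξ 6)`. -/
noncomputable def ψ (ξ : Fin 7 → ℂ) : ℂ :=
  ξ 0 * (ξ 1) ^ 2 + ξ 5 * (ξ 3) ^ 2 + (ξ 2 - ξ 1 * ξ 4 - ξ 3 * ξ 6) ^ 2

theorem grad_eq_of_hasFDerivAt {n : ℕ} {f : (Fin n → ℂ) → ℂ} {ξ g : Fin n → ℂ}
    (hf : HasFDerivAt f (∑ i, g i • (ContinuousLinearMap.proj i : (Fin n → ℂ) →L[ℂ] ℂ)) ξ) :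
    grad f ξ = g := by
  funext i
  simp [grad, hf.fderiv, Pi.single_apply]

def psiResidual (ξ : Fin 7 → ℂ) : ℂ := ξ 2 - ξ 1 * ξ 4 - ξ 3 * ξ 6

theorem psiResidual_add_smul_add_smul (ξ : Fin 7 → ℂ) (a b c d : ℂ) :
    psiResidual (ξ + a • ![c, 0, ξ 1, 0, 1, 0, 0] + b • ![0, 0, ξ 3, 0, 0, d, 1]) =
      psiResidual ξ := by
  simp only [psiResidual, Pi.add_apply, Pi.smul_apply, smul_eq_mul, Matrix.cons_val]
  ring

theorem grad_ψ (ξ : Fin 7 → ℂ) :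
    grad ψ ξ = ![ξ 1 ^ 2, 2 * ξ 0 * ξ 1 - 2 * ξ 4 * psiResidual ξ, 2 * psiResidual ξ,
      2 * ξ 5 * ξ 3 - 2 * ξ 6 * psiResidual ξ, -2 * ξ 1 * psiResidual ξ, ξ 3 ^ 2,
      -2 * ξ 3 * psiResidual ξ] := by
  apply grad_eq_of_hasFDerivAt
  have hcoord := fun i : Fin 7 => hasFDerivAt_apply (𝕜 := ℂ) i ξ
  have hres := ((hcoord 2).sub ((hcoord 1).mul (hcoord 4))).sub ((hcoord 3).mul (hcoord 6))
  have hψ := (((hcoord 0).mul ((hcoord 1).pow 2)).add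
    ((hcoord 5).mul ((hcoord 3).pow 2))).add (hres.pow 2)
  refine hψ.congr_fderiv (ContinuousLinearMap.ext fun η => ?_)
  simp only [Fin.sum_univ_seven, Matrix.cons_val, Pi.sub_apply, Pi.mul_apply, nsmul_eq_mul,
    Nat.cast_ofNat, add_apply, smul_apply, sub_apply, ContinuousLinearMap.proj_apply, smul_eq_mul, psiResidual]
  ring

theorem stmt_16 (ξ : Fin 7 → ℂ) (hy : ξ 1 ≠ 0) (hv : ξ 3 ≠ 0) (a b : ℂ) :
    grad ψ (ξ + a • ![(ξ 2 - ξ 1 * ξ 4 - ξ 3 * ξ 6) / ξ 1, 0, ξ 1, 0, 1, 0, 0]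
              + b • ![0, 0, ξ 3, 0, 0, (ξ 2 - ξ 1 * ξ 4 - ξ 3 * ξ 6) / ξ 3, 1]) =
      grad ψ ξ := by
  rw [grad_ψ, grad_ψ, psiResidual_add_smul_add_smul]
  ext i
  fin_cases i <;> simp only [Fin.reduceFinMk, Pi.add_apply, Pi.smul_apply, smul_eq_mul,
    Matrix.cons_val, psiResidual] <;> field_simp <;> ring
end
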